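/- arXiv:2305.19333 — 4 statements merged into one kernel-verified Lean document; each statement's English description precedes it below -/
import Mathlib

section
/- If q, r ∈ [1/2, 1], then |q + r - (3/2)qr - 2/3| ≤ (1/2) * |q - 2/3|. In particular, iterating the map q ↦ q + r - (3/2)qr with parameters r ∈ [1/2,1] contracts distances to 2/3 by a factor of at least 1/2 at each step. -/
/-- Contraction estimate: for `q, r ∈ [1/2, 1]`,
`|q + r - (3/2)qr - 2/3| ≤ (1/2)|q - 2/3|`. -/
theorem stmt_1 (q r : ℝ) (hq : q ∈ Set.Icc (1/2 : ℝ) 1) (hr : r ∈ Set.Icc (1/2 : ℝ) 1) :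
    |q + r - (3/2) * q * r - 2/3| ≤ (1/2) * |q - 2/3| := by
  obtain ⟨hr1, hr2⟩ := hr
  have key : q + r - (3/2) * q * r - 2/3 = (q - 2/3) * (1 - (3/2) * r) := by ring
  rw [key, abs_mul, mul_comm]
  apply mul_le_mul_of_nonneg_right _ (abs_nonneg _)
  rw [abs_le]
  constructor <;> nlinarith
end

section
/- Define q₀ = 1 and, for a sequence r₁, r₂, … ∈ [1/2,1], let qₘ = qₘ₋₁ + rₘ - (3/2)qₘ₋₁rₘ. Then qₘ ∈ [1/2,1] for all m, and |qₘ - 2/3| ≤ (1/2)^m · (1/3) ≤ 2^{-m} for all m ≥ 0. -/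
/-- Iterating the gate map `q ↦ q + r - (3/2)qr` with parameters `r ∈ [1/2,1]`
starting from `q₀ = 1` stays in `[1/2,1]` and converges to `2/3` with
`|qₘ - 2/3| ≤ (1/2)^m · (1/3) ≤ 2^{-m}`. -/
theorem stmt_3 (q r : ℕ → ℝ) (hq0 : q 0 = 1)
    (hr : ∀ m, r m ∈ Set.Icc (1/2 : ℝ) 1)
    (hrec : ∀ m, q (m + 1) = q m + r (m + 1) - (3/2) * q m * r (m + 1)) :
    ∀ m, q m ∈ Set.Icc (1/2 : ℝ) 1 ∧
      |q m - 2/3| ≤ (1/2 : ℝ)^m * (1/3) ∧ (1/2 : ℝ)^m * (1/3) ≤ (1/2 : ℝ)^m := by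
  intro m
  induction m with
  | zero =>
    refine ⟨⟨by rw [hq0]; norm_num, by rw [hq0]⟩, ?_, by norm_num⟩
    rw [hq0]; rw [abs_of_nonneg] <;> norm_num
  | succ n ih =>
    obtain ⟨⟨hql, hqu⟩, hd, _⟩ := ih
    obtain ⟨hrl, hru⟩ := hr (n + 1)
    refine ⟨⟨?_, ?_⟩, ?_, ?_⟩
    · rw [hrec]; nlinarith
    · rw [hrec]; nlinarith
    · have key : q (n+1) - 2/3 = (1 - (3/2) * r (n+1)) * (q n - 2/3) := by
        rw [hrec]; ring
      rw [key, abs_mul]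
      have h1 : |1 - (3/2) * r (n+1)| ≤ 1/2 := by
        rw [abs_le]; constructor <;> linarith
      calc |1 - (3/2) * r (n+1)| * |q n - 2/3|
          ≤ (1/2) * ((1/2)^n * (1/3)) := by
            exact mul_le_mul h1 hd (abs_nonneg _) (by norm_num)
        _ = (1/2)^(n+1) * (1/3) := by ring
    · have : ((1:ℝ)/2)^(n+1) > 0 := by positivity
      nlinarith
end

section
/- Let G = (V, E) be a countable graph with a group Γ of automorphisms acting transitively and unimodularly, and let Z : V × V → [0,∞) be a function with Z(u,v) = Z(φu, φv) for all φ ∈ Γ (the mass-transport invariance). Then Σ_{v ∈ V} Z(o, v) = Σ_{u ∈ V} Z(u, o) for any fixed root o. -/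
open MulAction ENNReal NNReal

/-!
Let `S` be the stabilizer of `o`. Invariance gives `Z(o, γ • o) = Z(γ⁻¹ • o, o)`, and
`γ • o ↦ γ⁻¹ • o` is a well-defined involution of the `S`-orbits (inversion on the double
cosets `S \ Γ / S`). Both sums are sums over `S`-orbits weighted by orbit size, and the
involution preserves orbit sizes: `γ` carries `S • (γ⁻¹ • o)` onto `Stab(γ • o) • o`, which has
the size of `S • (γ • o)` by unimodularity.
-/
namespace MulAction

section OrbitSum

variable {G α : Type*} [Group G] [MulAction G α]

theorem tsum_comp_mk_eq_tsum_encard_mul (φ : orbitRel.Quotient G α → ℝ≥0∞) :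
    ∑' a, φ (Quotient.mk'' a) = ∑' ω : orbitRel.Quotient G α, ω.orbit.encard * φ ω := by
  rw [← (Equiv.sigmaFiberEquiv fun a : α => (Quotient.mk'' a : orbitRel.Quotient G α)).tsum_eq,
    ENNReal.tsum_sigma']
  refine tsum_congr fun (ω : orbitRel.Quotient G α) => ?_
  calc ∑' a : {a // Quotient.mk'' a = ω}, φ (Quotient.mk'' a.1)
      = ∑' _ : {a // Quotient.mk'' a = ω}, φ ω := tsum_congr fun a => congrArg φ a.2
    _ = ∑' _ : ω.orbit, φ ω :=
      (Equiv.subtypeEquivRight fun _ => orbitRel.Quotient.mem_orbit.symm).tsum_eq fun _ => φ ω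
    _ = ω.orbit.encard * φ ω := ENNReal.tsum_set_const _ _

theorem tsum_comp_perm_mk_eq (σ : Equiv.Perm (orbitRel.Quotient G α))
    (hσ : ∀ ω, (σ ω).orbit.encard = ω.orbit.encard) (φ : orbitRel.Quotient G α → ℝ≥0∞) :
    ∑' a, φ (σ (Quotient.mk'' a)) = ∑' a, φ (Quotient.mk'' a) := by
  change ∑' a, (φ ∘ σ) (Quotient.mk'' a) = _
  rw [tsum_comp_mk_eq_tsum_encard_mul (φ ∘ σ), tsum_comp_mk_eq_tsum_encard_mul,
    ← σ.tsum_eq fun ω => ω.orbit.encard * φ ω]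
  simp only [Function.comp_apply, hσ]

end OrbitSum

section Stabilizer

variable {Γ V : Type*} [Group Γ] [MulAction Γ V]

open scoped Pointwise

theorem smul_orbit_stabilizer (γ : Γ) (o x : V) :
    γ • orbit (stabilizer Γ o) x = orbit (stabilizer Γ (γ • o)) (γ • x) := by
  ext y
  constructor
  · rintro ⟨-, ⟨s, rfl⟩, rfl⟩
    refine ⟨⟨γ * s * γ⁻¹, ?_⟩, ?_⟩
    · simp [mem_stabilizer_iff, mul_smul, mem_stabilizer_iff.mp s.2]
    · simp [Subgroup.smul_def, mul_smul]
  · rintro ⟨s, rfl⟩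
    refine ⟨(γ⁻¹ * s * γ) • x, ⟨⟨γ⁻¹ * s * γ, ?_⟩, rfl⟩, ?_⟩
    · simp [mem_stabilizer_iff, mul_smul, mem_stabilizer_iff.mp s.2]
    · simp [Subgroup.smul_def, mul_smul]

theorem inv_smul_mem_orbit_stabilizer {o : V} {γ γ' : Γ}
    (h : γ • o ∈ orbit (stabilizer Γ o) (γ' • o)) :
    γ⁻¹ • o ∈ orbit (stabilizer Γ o) (γ'⁻¹ • o) := by
  obtain ⟨s, hs⟩ := h
  change (s : Γ) • γ' • o = γ • o at hs
  refine ⟨⟨γ⁻¹ * s * γ', ?_⟩, ?_⟩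
  · rw [mem_stabilizer_iff, mul_smul, mul_smul, hs, inv_smul_smul]
  · change (γ⁻¹ * s * γ') • γ'⁻¹ • o = γ⁻¹ • o
    rw [mul_smul, mul_smul, smul_inv_smul, s.2]

theorem exists_perm_orbitRel_stabilizer [IsPretransitive Γ V] (o : V) :
    ∃ σ : Equiv.Perm (orbitRel.Quotient (stabilizer Γ o) V),
      ∀ γ : Γ, σ (Quotient.mk'' (γ • o)) = Quotient.mk'' (γ⁻¹ • o) := by
  choose g hg using exists_smul_eq Γ o
  let σ : orbitRel.Quotient (stabilizer Γ o) V → orbitRel.Quotient (stabilizer Γ o) V :=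
    Quotient.map' (fun v => (g v)⁻¹ • o) fun v w h => by
      apply inv_smul_mem_orbit_stabilizer
      rw [hg, hg]
      exact h
  have hσ : ∀ γ : Γ, σ (Quotient.mk'' (γ • o)) = Quotient.mk'' (γ⁻¹ • o) := fun γ =>
    Quotient.sound' (inv_smul_mem_orbit_stabilizer (by rw [hg]; exact mem_orbit_self _))
  have hinvol : Function.Involutive σ := by
    rintro ⟨v⟩
    obtain ⟨γ, rfl⟩ := exists_smul_eq Γ o v
    change σ (σ (Quotient.mk'' (γ • o))) = Quotient.mk'' (γ • o)
    rw [hσ, hσ, inv_inv]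
  exact ⟨hinvol.toPerm, hσ⟩

theorem encard_orbit_stabilizer_inv_smul
    (hunimod : ∀ u v : V,
      (orbit (stabilizer Γ u) v).encard = (orbit (stabilizer Γ v) u).encard)
    (o : V) (γ : Γ) :
    (orbit (stabilizer Γ o) (γ⁻¹ • o)).encard = (orbit (stabilizer Γ o) (γ • o)).encard := by
  rw [← Set.encard_smul_set γ, smul_orbit_stabilizer, smul_inv_smul]
  exact hunimod _ _

end Stabilizer

end MulAction

theorem stmt_9_general {V : Type*}
    (Γ : Type*) [Group Γ] [MulAction Γ V]
    (htrans : MulAction.IsPretransitive Γ V)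
    (hfin : ∀ u v : V, (MulAction.orbit (MulAction.stabilizer Γ u) v).Finite)
    (hunimod : ∀ u v : V,
      (MulAction.orbit (MulAction.stabilizer Γ u) v).ncard
        = (MulAction.orbit (MulAction.stabilizer Γ v) u).ncard)
    (Z : V → V → NNReal)
    (hinv : ∀ (g : Γ) (u v : V), Z (g • u) (g • v) = Z u v)
    (o : V) :
    (∑' v : V, (Z o v : ℝ≥0∞)) = ∑' u : V, (Z u o : ℝ≥0∞) := by
  have hunimod_encard : ∀ u v : V,
      (orbit (stabilizer Γ u) v).encard = (orbit (stabilizer Γ v) u).encard := fun u v => by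
    rw [← (hfin u v).cast_ncard_eq, ← (hfin v u).cast_ncard_eq, hunimod]
  obtain ⟨σ, hσ⟩ := exists_perm_orbitRel_stabilizer (Γ := Γ) o
  let φ : orbitRel.Quotient (stabilizer Γ o) V → ℝ≥0∞ :=
    Quotient.lift (fun u => (Z u o : ℝ≥0∞)) fun _ u ⟨s, hs⟩ => by
      change (s : Γ) • u = _ at hs
      rw [← hs, ← hinv s u o, s.2]
  have hcard : ∀ ω, (σ ω).orbit.encard = ω.orbit.encard := by
    rintro ⟨v⟩
    obtain ⟨γ, rfl⟩ := exists_smul_eq Γ o v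
    exact (congrArg (fun ω => ω.orbit.encard) (hσ γ)).trans
      (encard_orbit_stabilizer_inv_smul hunimod_encard o γ)
  have hZ : ∀ v, (Z o v : ℝ≥0∞) = φ (σ (Quotient.mk'' v)) := by
    intro v
    obtain ⟨γ, rfl⟩ := exists_smul_eq Γ o v
    rw [hσ]
    change _ = (Z (γ⁻¹ • o) o : ℝ≥0∞)
    rw [← hinv γ⁻¹ o (γ • o), inv_smul_smul]
  calc ∑' v, (Z o v : ℝ≥0∞) = ∑' v, φ (σ (Quotient.mk'' v)) := tsum_congr hZ
    _ = ∑' u, (Z u o : ℝ≥0∞) := tsum_comp_perm_mk_eq σ hcard φ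

/-- Mass transport principle (deterministic version): if a group `Γ` acts on the
vertex set of a countable graph `G` by graph automorphisms, transitively and
unimodularly (`|Stab(u)·v| = |Stab(v)·u| < ∞`), and `Z : V × V → [0,∞)` is
diagonally invariant, then `Σ_v Z(o,v) = Σ_u Z(u,o)`. -/
theorem stmt_9 {V : Type*} [Countable V] (G : SimpleGraph V)
    (Γ : Type*) [Group Γ] [MulAction Γ V]
    (haut : ∀ (g : Γ) (u v : V), G.Adj (g • u) (g • v) ↔ G.Adj u v)
    (htrans : MulAction.IsPretransitive Γ V)
    (hfin : ∀ u v : V, (MulAction.orbit (MulAction.stabilizer Γ u) v).Finite)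
    (hunimod : ∀ u v : V,
      (MulAction.orbit (MulAction.stabilizer Γ u) v).ncard
        = (MulAction.orbit (MulAction.stabilizer Γ v) u).ncard)
    (Z : V → V → NNReal)
    (hinv : ∀ (g : Γ) (u v : V), Z (g • u) (g • v) = Z u v)
    (o : V) :
    (∑' v : V, (Z o v : ℝ≥0∞)) = ∑' u : V, (Z u o : ℝ≥0∞) :=
  stmt_9_general Γ htrans hfin hunimod Z hinv o
end

section
/- Consider a rooted finite binary tree where each internal node is independently labeled OR with probability 1/2 and XOR with probability 1/2, each leaf carries the value True, and each internal node evaluates its gate on the values of its two children (OR outputs True iff at least one child is True; XOR outputs True iff exactly one child is True). Then the probability that the root evaluates to True is at least 1/2, and if the tree has at least k ≥ 1 leaves, this probability is within 1/k of 2/3. -/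
/-- Shapes of finite binary trees (every internal node has two children). -/
inductive BinShape : Type
  | leaf : BinShape
  | node : BinShape → BinShape → BinShape

/-- Binary trees whose internal nodes carry a gate label:
`true` = OR gate, `false` = XOR gate. -/
inductive GateTree : Type
  | leaf : GateTree
  | node : Bool → GateTree → GateTree → GateTree

/-- The underlying shape of a labeled tree. -/
def GateTree.shapeOf : GateTree → BinShape
  | .leaf => .leaf
  | .node _ l r => .node l.shapeOf r.shapeOf

/-- Evaluation: leaves are `True`; an OR node outputs `True` iff at least one
child is `True`; a XOR node outputs `True` iff exactly one child is `True`. -/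
def GateTree.eval : GateTree → Bool
  | .leaf => true
  | .node lab l r => if lab then (l.eval || r.eval) else (xor l.eval r.eval)

/-- The number of leaves of a shape. -/
def BinShape.leaves : BinShape → ℕ
  | .leaf => 1
  | .node l r => l.leaves + r.leaves

/-- The number of internal nodes of a shape. -/
def BinShape.internals : BinShape → ℕ
  | .leaf => 0
  | .node l r => l.internals + r.internals + 1

deriving instance DecidableEq for GateTree

open Finset in
def BinShape.allT : BinShape → Finset GateTree
  | .leaf => {.leaf}
  | .node l r => (Finset.univ ×ˢ l.allT ×ˢ r.allT).image
      (fun p => GateTree.node p.1 p.2.1 p.2.2)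

lemma mem_allT (t : BinShape) (s : GateTree) : s ∈ t.allT ↔ s.shapeOf = t := by
  induction t generalizing s with
  | leaf => cases s <;> simp [BinShape.allT, GateTree.shapeOf]
  | node l r ihl ihr =>
    cases s with
    | leaf => simp [BinShape.allT, GateTree.shapeOf]
    | node b x y =>
      simp only [BinShape.allT, Finset.mem_image, Finset.mem_product, Finset.mem_univ,
        true_and, Prod.exists, GateTree.shapeOf, BinShape.node.injEq]
      constructor
      · rintro ⟨b', x', y', ⟨hx, hy⟩, h⟩
        cases h
        exact ⟨(ihl x).mp hx, (ihr y).mp hy⟩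
      · rintro ⟨hx, hy⟩
        exact ⟨b, x, y, ⟨(ihl x).mpr hx, (ihr y).mpr hy⟩, rfl⟩

lemma node_inj : Function.Injective (fun p : Bool × GateTree × GateTree => GateTree.node p.1 p.2.1 p.2.2) := by
  rintro ⟨a, b, c⟩ ⟨d, e, f⟩ h
  simpa using h

lemma card_allT (t : BinShape) : t.allT.card = 2 ^ t.internals := by
  induction t with
  | leaf => simp [BinShape.allT, BinShape.internals]
  | node l r ihl ihr =>
    rw [BinShape.allT, Finset.card_image_of_injective _ node_inj]
    simp [Finset.card_product, ihl, ihr, BinShape.internals]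
    ring

def BinShape.tc (t : BinShape) : ℕ := (t.allT.filter (fun s => s.eval = true)).card

lemma tc_leaf : BinShape.leaf.tc = 1 := by decide

lemma tc_sum (t : BinShape) : (t.tc : ℝ) = ∑ s ∈ t.allT, (if s.eval = true then (1:ℝ) else 0) := by
  rw [BinShape.tc, Finset.card_filter]
  push_cast
  rfl

lemma tc_node (l r : BinShape) : ((BinShape.node l r).tc : ℝ)
    = 2 * ((l.tc : ℝ) * 2 ^ r.internals) + 2 * ((2:ℝ) ^ l.internals * r.tc)
      - 3 * ((l.tc : ℝ) * r.tc) := by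
  rw [tc_sum, BinShape.allT, Finset.sum_image (fun a _ b _ h => node_inj h)]
  rw [Finset.sum_product, Fintype.sum_bool]
  rw [Finset.sum_product, Finset.sum_product]
  have key : ∀ a b : Bool,
      ((if (a || b) = true then (1:ℝ) else 0) + (if (xor a b) = true then (1:ℝ) else 0))
      = 2 * (if a = true then (1:ℝ) else 0) + 2 * (if b = true then (1:ℝ) else 0)
        - 3 * ((if a = true then (1:ℝ) else 0) * (if b = true then (1:ℝ) else 0)) := by
    intro a b; cases a <;> cases b <;> norm_num
  rw [← Finset.sum_add_distrib]
  simp_rw [← Finset.sum_add_distrib]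
  simp only [GateTree.eval, if_true, Bool.false_eq_true, if_false]
  rw [Finset.sum_congr rfl fun x _ => Finset.sum_congr rfl fun y _ => key x.eval y.eval]
  rw [tc_sum l, tc_sum r]
  rw [show ((2:ℝ) ^ r.internals) = (r.allT.card : ℝ) by rw [card_allT]; norm_cast,
      show ((2:ℝ) ^ l.internals) = (l.allT.card : ℝ) by rw [card_allT]; norm_cast]
  simp only [Finset.sum_sub_distrib, Finset.sum_add_distrib, Finset.sum_const,
    nsmul_eq_mul, ← Finset.mul_sum, ← Finset.sum_mul]
  ring

noncomputable def BinShape.p (t : BinShape) : ℝ := (t.tc : ℝ) / 2 ^ t.internals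

lemma one_le_leaves (t : BinShape) : 1 ≤ t.leaves := by
  induction t with
  | leaf => simp [BinShape.leaves]
  | node l r ihl ihr => simp [BinShape.leaves]; omega

lemma p_node (l r : BinShape) :
    (BinShape.node l r).p = l.p + r.p - (3/2) * (l.p * r.p) := by
  unfold BinShape.p
  rw [BinShape.internals, tc_node]
  have hl : (0:ℝ) < 2 ^ l.internals := by positivity
  have hr : (0:ℝ) < 2 ^ r.internals := by positivity
  field_simp
  ring

lemma p_bounds (t : BinShape) :
    1/2 ≤ t.p ∧ t.p ≤ 1 ∧ |t.p - 2/3| ≤ 1 / (t.leaves : ℝ) := by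
  induction t with
  | leaf =>
    have : BinShape.leaf.p = 1 := by
      unfold BinShape.p; rw [tc_leaf, BinShape.internals]; norm_num
    rw [this, BinShape.leaves]
    norm_num [abs_le]
  | node l r ihl ihr =>
    obtain ⟨hl1, hl2, hl3⟩ := ihl
    obtain ⟨hr1, hr2, hr3⟩ := ihr
    rw [p_node, BinShape.leaves]
    set q := l.p
    set w := r.p
    have hdiff : q + w - (3/2) * (q * w) - 2/3 = -(3/2) * ((q - 2/3) * (w - 2/3)) := by ring
    have haq : |q - 2/3| ≤ 1/3 := by rw [abs_le]; constructor <;> nlinarith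
    have haw : |w - 2/3| ≤ 1/3 := by rw [abs_le]; constructor <;> nlinarith
    have hLl : (1:ℝ) ≤ (l.leaves : ℝ) := by exact_mod_cast one_le_leaves l
    have hLr : (1:ℝ) ≤ (r.leaves : ℝ) := by exact_mod_cast one_le_leaves r
    refine ⟨by nlinarith, by nlinarith, ?_⟩
    rw [hdiff, abs_mul, abs_mul]
    have h32 : |(-(3/2) : ℝ)| = 3/2 := by norm_num
    rw [h32]
    have habs : |q - 2/3| * |w - 2/3| ≥ 0 := by positivity
    push_cast
    rcases le_total (l.leaves : ℝ) (r.leaves : ℝ) with h | h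
    · have h1 : |w - 2/3| ≤ 1 / (r.leaves : ℝ) := hr3
      have h2 : (0:ℝ) < (r.leaves : ℝ) := by linarith
      rw [le_div_iff₀ (by linarith : (0:ℝ) < (l.leaves:ℝ) + (r.leaves:ℝ))]
      have : |q - 2/3| * |w - 2/3| ≤ (1/3) * (1 / (r.leaves:ℝ)) :=
        mul_le_mul haq h1 (abs_nonneg _) (by norm_num)
      have hinv : (1 / (r.leaves:ℝ)) * (r.leaves:ℝ) = 1 := by field_simp
      nlinarith [mul_le_mul_of_nonneg_right this (by linarith : (0:ℝ) ≤ (l.leaves:ℝ) + (r.leaves:ℝ)), habs, h]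
    · have h1 : |q - 2/3| ≤ 1 / (l.leaves : ℝ) := hl3
      have h2 : (0:ℝ) < (l.leaves : ℝ) := by linarith
      rw [le_div_iff₀ (by linarith : (0:ℝ) < (l.leaves:ℝ) + (r.leaves:ℝ))]
      have : |q - 2/3| * |w - 2/3| ≤ (1 / (l.leaves:ℝ)) * (1/3) :=
        mul_le_mul h1 haw (abs_nonneg _) (by positivity)
      have hinv : (1 / (l.leaves:ℝ)) * (l.leaves:ℝ) = 1 := by field_simp
      nlinarith [mul_le_mul_of_nonneg_right this (by linarith : (0:ℝ) ≤ (l.leaves:ℝ) + (r.leaves:ℝ)), habs, h]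

lemma ncard_eq (t : BinShape) :
    ({s : GateTree | s.shapeOf = t ∧ s.eval = true}.ncard : ℝ) = (t.tc : ℝ) := by
  congr 1
  rw [BinShape.tc, ← Set.ncard_coe_finset]
  congr 1
  ext s
  simp [mem_allT]

/-- If each internal node of a finite binary tree is labeled OR/XOR by
independent fair coins and leaves carry `True`, then the probability that the
root evaluates to `True` (the fraction of labelings evaluating to `True` among
all `2^{#internal}` labelings) is at least `1/2`, and if the tree has at least
`k ≥ 1` leaves this probability is within `1/k` of `2/3`. -/
theorem stmt_16 (t : BinShape) (k : ℕ) (hk : 1 ≤ k) (hleaves : k ≤ t.leaves) :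
    (1/2 : ℝ) ≤
      ({s : GateTree | s.shapeOf = t ∧ s.eval = true}.ncard : ℝ) / 2 ^ t.internals ∧
    |({s : GateTree | s.shapeOf = t ∧ s.eval = true}.ncard : ℝ) / 2 ^ t.internals
        - 2/3| ≤ 1 / (k : ℝ) := by
  have hp : ({s : GateTree | s.shapeOf = t ∧ s.eval = true}.ncard : ℝ) / 2 ^ t.internals
      = t.p := by rw [ncard_eq]; rfl
  obtain ⟨h1, h2, h3⟩ := p_bounds t
  rw [hp]
  refine ⟨h1, h3.trans ?_⟩
  have hk' : (0:ℝ) < (k:ℝ) := by exact_mod_cast hk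
  have : (k:ℝ) ≤ (t.leaves : ℝ) := by exact_mod_cast hleaves
  exact one_div_le_one_div_of_le hk' this
end
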